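/- arXiv:2602.06372 — 14 statements merged into one kernel-verified Lean document; each statement's English description precedes it below -/
import Mathlib

section
/- Let τ be a soft topology on a soft set F. Then for every t ∈ A, the component topology τ_t = {H t | H ∈ τ} is a topology on the set F t; explicitly: every member of τ_t is a subset of F t; ∅ ∈ τ_t and F t ∈ τ_t; for every subfamily S ⊆ τ_t the union ⋃₀ S belongs to τ_t; and for all U, V ∈ τ_t the intersection U ∩ V belongs to τ_t. -/
namespace SoftBitop

variable {X A : Type*}

/-- `H` is a soft subset of `F`: every section of `H` is contained in the
corresponding section of `F`. -/
def SoftSubset (F H : A → Set X) : Prop := ∀ t, H t ⊆ F t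

/-- The null soft set `Φ`. -/
def NullSoft : A → Set X := fun _ => (∅ : Set X)

/-- `τ` is a soft topology on the soft set `F`. -/
def IsSoftTopology (F : A → Set X) (τ : Set (A → Set X)) : Prop :=
  (∀ H ∈ τ, SoftSubset F H) ∧
  NullSoft ∈ τ ∧ F ∈ τ ∧
  (∀ S ⊆ τ, (fun t => ⋃ H ∈ S, H t) ∈ τ) ∧
  (∀ H ∈ τ, ∀ K ∈ τ, (fun t => H t ∩ K t) ∈ τ)

/-- The set of soft elements of `F`. -/
def SE (F : A → Set X) : Set (A → X) := {a | ∀ t, a t ∈ F t}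

/-- The `t`-section of a set `T` of soft elements. -/
def sectionAt (T : Set (A → X)) (t : A) : Set X := {x | ∃ a ∈ T, a t = x}

/-- The component topology `τ_t = {H t | H ∈ τ}`. -/
def compTop (τ : Set (A → Set X)) (t : A) : Set (Set X) := {U | ∃ H ∈ τ, H t = U}

/-- The induced collection `τ*` on the set of soft elements. -/
def tauStar (F : A → Set X) (τ : Set (A → Set X)) : Set (Set (A → X)) :=
  {T | T ⊆ SE F ∧ ∀ t, sectionAt T t ∈ compTop τ t}

/-- Soft membership: `a ∈_s H`. -/
def MemS (a : A → X) (H : A → Set X) : Prop := ∀ t, a t ∈ H t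

/-- A soft topology is canonical (sectionwise generated) if it contains every
soft subset of `F` all of whose sections are componentwise open. -/
def Canonical (F : A → Set X) (τ : Set (A → Set X)) : Prop :=
  ∀ H : A → Set X, SoftSubset F H → (∀ t, H t ∈ compTop τ t) → H ∈ τ

/-- Pairwise soft `T0`. -/
def PairwiseSoftT0 (F : A → Set X) (τ1 τ2 : Set (A → Set X)) : Prop :=
  ∀ a ∈ SE F, ∀ b ∈ SE F, a ≠ b →
    ∃ H ∈ τ1 ∪ τ2, (MemS a H ∧ ¬ MemS b H) ∨ (MemS b H ∧ ¬ MemS a H)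

/-- Pairwise soft `T1`. -/
def PairwiseSoftT1 (F : A → Set X) (τ1 τ2 : Set (A → Set X)) : Prop :=
  ∀ a ∈ SE F, ∀ b ∈ SE F, a ≠ b →
    ∃ H ∈ τ1, ∃ K ∈ τ2, MemS a H ∧ ¬ MemS b H ∧ MemS b K ∧ ¬ MemS a K

/-- Pairwise soft `T2` (Hausdorff). -/
def PairwiseSoftT2 (F : A → Set X) (τ1 τ2 : Set (A → Set X)) : Prop :=
  ∀ a ∈ SE F, ∀ b ∈ SE F, a ≠ b →
    ∃ H ∈ τ1, ∃ K ∈ τ2, MemS a H ∧ MemS b K ∧ ∀ t, H t ∩ K t = ∅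

/-- Pairwise soft compactness of a soft subset `G`. -/
def PairwiseSoftCompact (τ1 τ2 : Set (A → Set X)) (G : A → Set X) : Prop :=
  ∀ C : Set (A → Set X), C ⊆ τ1 ∪ τ2 → (∀ t, G t ⊆ ⋃ H ∈ C, H t) →
    ∃ C0 ⊆ C, C0.Finite ∧ ∀ t, G t ⊆ ⋃ H ∈ C0, H t

/-- each component topology `τ_t` is a topology on `F t`. -/
theorem stmt0 {X A : Type*} (F : A → Set X) (τ : Set (A → Set X))
    (hτ : IsSoftTopology F τ) (t : A) :
    (∀ U ∈ compTop τ t, U ⊆ F t) ∧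
    (∅ : Set X) ∈ compTop τ t ∧
    F t ∈ compTop τ t ∧
    (∀ S ⊆ compTop τ t, ⋃₀ S ∈ compTop τ t) ∧
    (∀ U ∈ compTop τ t, ∀ V ∈ compTop τ t, U ∩ V ∈ compTop τ t) := by
  obtain ⟨hsub, hnull, hF, hUnion, hInter⟩ := hτ
  refine ⟨?_, ⟨NullSoft, hnull, rfl⟩, ⟨F, hF, rfl⟩, ?_, ?_⟩
  · rintro U ⟨H, hH, rfl⟩
    exact hsub H hH t
  · intro S hS
    refine ⟨_, hUnion {H ∈ τ | H t ∈ S} (fun H hH => hH.1), ?_⟩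
    ext x
    simp only [Set.mem_iUnion, Set.mem_sUnion, Set.mem_setOf_eq]
    constructor
    · rintro ⟨H, ⟨hHτ, hHS⟩, hx⟩
      exact ⟨H t, hHS, hx⟩
    · rintro ⟨U, hU, hx⟩
      obtain ⟨H, hHτ, rfl⟩ := hS hU
      exact ⟨H, ⟨hHτ, hU⟩, hx⟩
  · rintro U ⟨H, hH, rfl⟩ V ⟨K, hK, rfl⟩
    exact ⟨_, hInter H hH K hK, rfl⟩

end SoftBitop
end

section
/- Let τ be a soft topology on the soft set F and let H ∈ τ be such that H t is nonempty for all t ∈ A. Then SE(H) ⊆ SE(F) and SE(H) ∈ τ*; that is, for every t ∈ A, the t-section {a t | a ∈ SE(H)} belongs to the component topology τ_t. -/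
namespace SoftBitop

variable {X A : Type*}

/-- if `H ∈ τ` has nonempty sections, then `SE H ⊆ SE F` and
`SE H ∈ τ*`. -/
theorem stmt2 {X A : Type*} (F : A → Set X) (τ : Set (A → Set X))
    (hτ : IsSoftTopology F τ) (H : A → Set X) (hH : H ∈ τ)
    (hne : ∀ t, (H t).Nonempty) :
    SE H ⊆ SE F ∧ ∀ t, sectionAt (SE H) t ∈ compTop τ t := by
  classical
  constructor
  · intro a ha t
    exact hτ.1 H hH t (ha t)
  · intro t
    refine ⟨H, hH, ?_⟩
    ext x
    constructor
    · intro hx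
      refine ⟨fun s => if s = t then x else (hne s).some, ?_, by simp⟩
      intro s
      by_cases h : s = t
      · subst h; simpa using hx
      · simpa [h] using (hne s).some_mem
    · rintro ⟨a, ha, rfl⟩
      exact ha t

end SoftBitop
end

section
/- Let τ be a soft topology on the soft set F with F t nonempty for all t ∈ A. Then the empty set and SE(F) both belong to τ*, and τ* is closed under arbitrary unions: if T_i ∈ τ* for every i in an index set I, then ⋃_{i ∈ I} T_i ∈ τ*. -/
namespace SoftBitop

variable {X A : Type*}

/-- `∅` and `SE F` belong to `τ*`, and `τ*` is closed under
arbitrary (indexed) unions. -/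
theorem stmt3 {X A : Type*} {I : Type*} (F : A → Set X)
    (hF : ∀ t, (F t).Nonempty) (τ : Set (A → Set X))
    (hτ : IsSoftTopology F τ) :
    (∅ : Set (A → X)) ∈ tauStar F τ ∧
    SE F ∈ tauStar F τ ∧
    ∀ T : I → Set (A → X), (∀ i, T i ∈ tauStar F τ) →
      (⋃ i, T i) ∈ tauStar F τ := by
  obtain ⟨hsub, hnull, hFmem, hunion, hinter⟩ := hτ
  refine ⟨⟨by simp, fun t => ⟨NullSoft, hnull, ?_⟩⟩, ⟨le_refl _, fun t => ⟨F, hFmem, ?_⟩⟩, ?_⟩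
  · ext x; simp [NullSoft, sectionAt]
  · ext x
    simp only [sectionAt, Set.mem_setOf_eq]
    constructor
    · intro hx
      classical
      refine ⟨fun s => if h : s = t then x else (hF s).choose, fun s => ?_, by simp⟩
      by_cases h : s = t
      · subst h; simpa using hx
      · simpa [h] using (hF s).choose_spec
    · rintro ⟨a, ha, rfl⟩; exact ha t
  · intro T hT
    constructor
    · intro a ha
      obtain ⟨i, hi⟩ := Set.mem_iUnion.mp ha
      exact (hT i).1 hi
    · intro t
      classical
      choose H hHτ hHt using fun i => (hT i).2 t
      refine ⟨fun s => ⋃ G ∈ Set.range H, G s, hunion _ (by rintro _ ⟨i, rfl⟩; exact hHτ i), ?_⟩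
      ext x
      simp only [Set.mem_iUnion, sectionAt, Set.mem_setOf_eq]
      constructor
      · rintro ⟨G, ⟨i, rfl⟩, hx⟩
        rw [hHt i] at hx
        obtain ⟨a, ha, rfl⟩ := hx
        exact ⟨a, ⟨i, ha⟩, rfl⟩
      · rintro ⟨a, ⟨i, hi⟩, rfl⟩
        exact ⟨H i, ⟨i, rfl⟩, by rw [hHt i]; exact ⟨a, hi, rfl⟩⟩


end SoftBitop
end

section
/- Let τ be a soft topology on the soft set F and define the canonical enlargement τ^can := {H : A → Set X | H is a soft subset of F and H t ∈ τ_t for all t ∈ A}. Then τ^can is a soft topology on F and τ ⊆ τ^can. -/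
namespace SoftBitop

variable {X A : Type*}

/-- the canonical enlargement `τ^can` is a soft topology on `F`
containing `τ`. -/
theorem stmt5 {X A : Type*} (F : A → Set X) (τ : Set (A → Set X))
    (hτ : IsSoftTopology F τ) :
    IsSoftTopology F
      {H : A → Set X | SoftSubset F H ∧ ∀ t, H t ∈ compTop τ t} ∧
    τ ⊆ {H : A → Set X | SoftSubset F H ∧ ∀ t, H t ∈ compTop τ t} := by
  obtain ⟨hsub, hnull, hF, hunion, hinter⟩ := hτ
  constructor
  · refine ⟨fun H hH => hH.1, ?_, ?_, ?_, ?_⟩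
    · exact ⟨fun t => by simp [NullSoft], fun t => ⟨NullSoft, hnull, rfl⟩⟩
    · exact ⟨fun t => le_refl _, fun t => ⟨F, hF, rfl⟩⟩
    · intro S hS
      refine ⟨?_, ?_⟩
      · intro t x hx
        simp only [Set.mem_iUnion] at hx
        obtain ⟨H, hH, hx⟩ := hx
        exact (hS hH).1 t hx
      · intro t
        set S' : Set (A → Set X) := {K ∈ τ | ∃ H ∈ S, K t = H t} with hS'
        refine ⟨fun s => ⋃ K ∈ S', K s, hunion S' (fun K hK => hK.1), ?_⟩
        ext x
        simp only [Set.mem_iUnion]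
        constructor
        · rintro ⟨K, ⟨hKτ, H, hHS, hKH⟩, hx⟩
          exact ⟨H, hHS, hKH ▸ hx⟩
        · rintro ⟨H, hHS, hx⟩
          obtain ⟨K, hKτ, hKt⟩ := (hS hHS).2 t
          exact ⟨K, ⟨hKτ, H, hHS, hKt⟩, hKt ▸ hx⟩
    · intro H hH K hK
      refine ⟨fun t x hx => hH.1 t hx.1, fun t => ?_⟩
      obtain ⟨H', hH', hHt⟩ := hH.2 t
      obtain ⟨K', hK', hKt⟩ := hK.2 t
      exact ⟨fun s => H' s ∩ K' s, hinter H' hH' K' hK', by simp [hHt, hKt]⟩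
  · intro H hH
    exact ⟨hsub H hH, fun t => ⟨H, hH, rfl⟩⟩

end SoftBitop
end

section
/- Let τ be a soft topology on the soft set F and let τ^can := {H : A → Set X | H is a soft subset of F and H t ∈ τ_t for all t ∈ A} be its canonical enlargement. Then for every t ∈ A one has {H t | H ∈ τ^can} = τ_t, and consequently the induced collections on soft elements coincide: (τ^can)* = τ*. -/
namespace SoftBitop

variable {X A : Type*}

/-- the canonical enlargement has the same component topologies,
and induces the same collection on soft elements. -/
theorem stmt6 {X A : Type*} (F : A → Set X) (τ : Set (A → Set X))
    (hτ : IsSoftTopology F τ) :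
    (∀ t, compTop {H : A → Set X | SoftSubset F H ∧ ∀ s, H s ∈ compTop τ s} t
        = compTop τ t) ∧
    tauStar F {H : A → Set X | SoftSubset F H ∧ ∀ s, H s ∈ compTop τ s}
        = tauStar F τ := by
  have hcomp : ∀ t, compTop {H : A → Set X | SoftSubset F H ∧ ∀ s, H s ∈ compTop τ s} t
      = compTop τ t := by
    intro t
    ext U
    constructor
    · rintro ⟨H, ⟨-, hH⟩, rfl⟩
      exact hH t
    · rintro ⟨H, hH, rfl⟩
      exact ⟨H, ⟨hτ.1 H hH, fun s => ⟨H, hH, rfl⟩⟩, rfl⟩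
  refine ⟨hcomp, ?_⟩
  unfold tauStar
  ext T
  simp only [Set.mem_setOf_eq, hcomp]

end SoftBitop
end

section
/- Let (F, τ1, τ2) be a soft bitopological space with F t nonempty for all t ∈ A. If (F, τ1, τ2) is pairwise soft T2, then for every t ∈ A the component bitopological space (F t, (τ1)_t, (τ2)_t) is pairwise T2: for all distinct α, β ∈ F t there exist U ∈ (τ1)_t and V ∈ (τ2)_t with α ∈ U, β ∈ V, and U ∩ V = ∅. -/
namespace SoftBitop

variable {X A : Type*}

/-- pairwise soft `T2` implies each component bitopological
space is pairwise `T2`. -/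
theorem stmt10 {X A : Type*} (F : A → Set X) (hF : ∀ t, (F t).Nonempty)
    (τ1 τ2 : Set (A → Set X))
    (h1 : IsSoftTopology F τ1) (h2 : IsSoftTopology F τ2)
    (hT2 : PairwiseSoftT2 F τ1 τ2) :
    ∀ t, ∀ α ∈ F t, ∀ β ∈ F t, α ≠ β →
      ∃ U ∈ compTop τ1 t, ∃ V ∈ compTop τ2 t,
        α ∈ U ∧ β ∈ V ∧ U ∩ V = ∅ := by

  intro t α hα β hβ hne
  classical
  have hc : ∀ s, ∃ x, x ∈ F s := fun s => hF s
  choose c hc using hc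
  set a : A → X := fun s => if s = t then α else c s with ha
  set b : A → X := fun s => if s = t then β else c s with hb
  have haSE : a ∈ SE F := by
    intro s; by_cases h : s = t
    · subst h; simpa [a] using hα
    · simpa [a, h] using hc s
  have hbSE : b ∈ SE F := by
    intro s; by_cases h : s = t
    · subst h; simpa [b] using hβ
    · simpa [b, h] using hc s
  have hab : a ≠ b := by
    intro h
    apply hne
    have := congrFun h t
    simpa [a, b] using this
  obtain ⟨H, hH, K, hK, haH, hbK, hdisj⟩ := hT2 a haSE b hbSE hab
  refine ⟨H t, ⟨H, hH, rfl⟩, K t, ⟨K, hK, rfl⟩, ?_, ?_, hdisj t⟩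
  · simpa [a] using haH t
  · simpa [b] using hbK t


end SoftBitop
end

section
/- Let (F, τ1, τ2) be a soft bitopological space with F t nonempty for all t ∈ A, and suppose both τ1 and τ2 are canonical. Then (F, τ1, τ2) is pairwise soft T0 if and only if for every t ∈ A the component bitopological space (F t, (τ1)_t, (τ2)_t) is pairwise T0: for all distinct α, β ∈ F t there exists U ∈ (τ1)_t ∪ (τ2)_t with (α ∈ U and β ∉ U) or (β ∈ U and α ∉ U). -/
namespace SoftBitop

variable {X A : Type*}

/-- Patch lemma: in a canonical soft topology containing `H0`, the soft set that
agrees with `H0` at `t0` and with `F` elsewhere is open. -/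
lemma patch {X A : Type*} (F : A → Set X) (τ : Set (A → Set X))
    (h : IsSoftTopology F τ) (hc : Canonical F τ) (t0 : A) (H0 : A → Set X)
    (hH0 : H0 ∈ τ) :
    ∃ K ∈ τ, K t0 = H0 t0 ∧ ∀ t, t ≠ t0 → K t = F t := by
  classical
  refine ⟨fun t => if t = t0 then H0 t else F t, ?_, by simp, fun t ht => by simp [ht]⟩
  apply hc
  · intro t x hx
    by_cases ht : t = t0 <;> simp [ht] at hx ⊢
    · subst ht; exact h.1 H0 hH0 t hx
    · exact hx
  · intro t
    by_cases ht : t = t0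
    · subst ht; exact ⟨H0, hH0, by simp⟩
    · exact ⟨F, h.2.2.1, by simp [ht]⟩

/-- for canonical soft bitopologies, pairwise soft `T0` holds iff
every component bitopological space is pairwise `T0`. -/
theorem stmt11 {X A : Type*} (F : A → Set X) (hF : ∀ t, (F t).Nonempty)
    (τ1 τ2 : Set (A → Set X))
    (h1 : IsSoftTopology F τ1) (h2 : IsSoftTopology F τ2)
    (hc1 : Canonical F τ1) (hc2 : Canonical F τ2) :
    PairwiseSoftT0 F τ1 τ2 ↔
      ∀ t, ∀ α ∈ F t, ∀ β ∈ F t, α ≠ β →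
        ∃ U ∈ compTop τ1 t ∪ compTop τ2 t,
          (α ∈ U ∧ β ∉ U) ∨ (β ∈ U ∧ α ∉ U) := by
  classical
  constructor
  · intro hT0 t0 α hα β hβ hαβ
    set a : A → X := fun t => if t = t0 then α else (hF t).some with ha
    set b : A → X := fun t => if t = t0 then β else (hF t).some with hb
    have haS : a ∈ SE F := by
      intro t
      by_cases ht : t = t0
      · subst ht; simpa [ha] using hα
      · simpa [ha, ht] using (hF t).some_mem
    have hbS : b ∈ SE F := by
      intro t
      by_cases ht : t = t0
      · subst ht; simpa [hb] using hβ
      · simpa [hb, ht] using (hF t).some_mem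
    have hne : a ≠ b := by
      intro h
      apply hαβ
      have := congrFun h t0
      simpa [ha, hb] using this
    obtain ⟨H, hH, hsep⟩ := hT0 a haS b hbS hne
    have hU : H t0 ∈ compTop τ1 t0 ∪ compTop τ2 t0 := by
      rcases hH with hH | hH
      · exact Or.inl ⟨H, hH, rfl⟩
      · exact Or.inr ⟨H, hH, rfl⟩
    refine ⟨H t0, hU, ?_⟩
    rcases hsep with ⟨haH, hbH⟩ | ⟨hbH, haH⟩
    · left
      have hαH : α ∈ H t0 := by simpa [ha] using haH t0
      refine ⟨hαH, fun hβH => hbH ?_⟩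
      intro t
      by_cases ht : t = t0
      · subst ht; simpa [hb] using hβH
      · have := haH t
        simpa [ha, hb, ht] using this
    · right
      have hβH : β ∈ H t0 := by simpa [hb] using hbH t0
      refine ⟨hβH, fun hαH => haH ?_⟩
      intro t
      by_cases ht : t = t0
      · subst ht; simpa [ha] using hαH
      · have := hbH t
        simpa [ha, hb, ht] using this
  · intro hcomp a haS b hbS hab
    obtain ⟨t0, ht0⟩ := Function.ne_iff.mp hab
    obtain ⟨U, hU, hsep⟩ := hcomp t0 (a t0) (haS t0) (b t0) (hbS t0) ht0
    have key : ∀ (τ : Set (A → Set X)), IsSoftTopology F τ → Canonical F τ →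
        U ∈ compTop τ t0 →
        ∃ K ∈ τ, (MemS a K ∧ ¬ MemS b K) ∨ (MemS b K ∧ ¬ MemS a K) := by
      intro τ hτ hcτ hUτ
      obtain ⟨H0, hH0, hH0U⟩ := hUτ
      obtain ⟨K, hK, hKt0, hKother⟩ := patch F τ hτ hcτ t0 H0 hH0
      have hKU : K t0 = U := hKt0.trans hH0U
      refine ⟨K, hK, ?_⟩
      rcases hsep with ⟨haU, hbU⟩ | ⟨hbU, haU⟩
      · left
        constructor
        · intro t
          by_cases ht : t = t0
          · subst ht; rw [hKU]; exact haU
          · rw [hKother t ht]; exact haS t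
        · intro hm
          exact hbU (by simpa [hKU] using hm t0)
      · right
        constructor
        · intro t
          by_cases ht : t = t0
          · subst ht; rw [hKU]; exact hbU
          · rw [hKother t ht]; exact hbS t
        · intro hm
          exact haU (by simpa [hKU] using hm t0)
    rcases hU with hU | hU
    · obtain ⟨K, hK, hs⟩ := key τ1 h1 hc1 hU
      exact ⟨K, Or.inl hK, hs⟩
    · obtain ⟨K, hK, hs⟩ := key τ2 h2 hc2 hU
      exact ⟨K, Or.inr hK, hs⟩

end SoftBitop
end

section
/- Let (F, τ1, τ2) be a soft bitopological space with F t nonempty for all t ∈ A, and suppose both τ1 and τ2 are canonical. Then (F, τ1, τ2) is pairwise soft T1 if and only if for every t ∈ A the component bitopological space (F t, (τ1)_t, (τ2)_t) is pairwise T1: for all distinct α, β ∈ F t there exist U ∈ (τ1)_t and V ∈ (τ2)_t with α ∈ U, β ∉ U, β ∈ V, and α ∉ V. -/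
namespace SoftBitop

variable {X A : Type*}

/-- for canonical soft bitopologies, pairwise soft `T1` holds iff
every component bitopological space is pairwise `T1`. -/
theorem stmt12 {X A : Type*} (F : A → Set X) (hF : ∀ t, (F t).Nonempty)
    (τ1 τ2 : Set (A → Set X))
    (h1 : IsSoftTopology F τ1) (h2 : IsSoftTopology F τ2)
    (hc1 : Canonical F τ1) (hc2 : Canonical F τ2) :
    PairwiseSoftT1 F τ1 τ2 ↔
      ∀ t, ∀ α ∈ F t, ∀ β ∈ F t, α ≠ β →
        ∃ U ∈ compTop τ1 t, ∃ V ∈ compTop τ2 t,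
          α ∈ U ∧ β ∉ U ∧ β ∈ V ∧ α ∉ V := by
  classical
  constructor
  · intro hT1 t0 α hα β hβ hne
    choose c hc using hF
    set a : A → X := fun t => if t = t0 then α else c t with ha
    set b : A → X := fun t => if t = t0 then β else c t with hb
    have haSE : a ∈ SE F := by
      intro t; by_cases h : t = t0
      · subst h; simpa [ha] using hα
      · simpa [ha, h] using hc t
    have hbSE : b ∈ SE F := by
      intro t; by_cases h : t = t0
      · subst h; simpa [hb] using hβ
      · simpa [hb, h] using hc t
    have hab : a ≠ b := by
      intro h
      have := congrFun h t0
      simp [ha, hb] at this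
      exact hne this
    obtain ⟨H, hH, K, hK, haH, hbH, hbK, haK⟩ := hT1 a haSE b hbSE hab
    refine ⟨H t0, ⟨H, hH, rfl⟩, K t0, ⟨K, hK, rfl⟩, ?_, ?_, ?_, ?_⟩
    · simpa [ha] using haH t0
    · intro hβH
      apply hbH
      intro t; by_cases h : t = t0
      · subst h; simpa [hb] using hβH
      · have : a t ∈ H t := haH t
        simpa [ha, hb, h] using this
    · simpa [hb] using hbK t0
    · intro hαK
      apply haK
      intro t; by_cases h : t = t0
      · subst h; simpa [ha] using hαK
      · have : b t ∈ K t := hbK t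
        simpa [ha, hb, h] using this
  · intro hcomp a haSE b hbSE hab
    have : ∃ t0, a t0 ≠ b t0 := by
      by_contra h
      push_neg at h
      exact hab (funext h)
    obtain ⟨t0, hne⟩ := this
    obtain ⟨U, hU, V, hV, hαU, hβU, hβV, hαV⟩ :=
      hcomp t0 (a t0) (haSE t0) (b t0) (hbSE t0) hne
    obtain ⟨H0, hH0, hH0U⟩ := hU
    obtain ⟨K0, hK0, hK0V⟩ := hV
    set H : A → Set X := fun t => if t = t0 then U else F t with hHdef
    set K : A → Set X := fun t => if t = t0 then V else F t with hKdef
    have hUF : U ⊆ F t0 := hH0U ▸ h1.1 H0 hH0 t0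
    have hVF : V ⊆ F t0 := hK0V ▸ h2.1 K0 hK0 t0
    have hHmem : H ∈ τ1 := by
      apply hc1
      · intro t; by_cases h : t = t0
        · subst h; simpa [hHdef] using hUF
        · simp [hHdef, h]
      · intro t; by_cases h : t = t0
        · subst h; simpa [hHdef] using ⟨H0, hH0, hH0U⟩
        · exact ⟨F, h1.2.2.1, by simp [hHdef, h]⟩
    have hKmem : K ∈ τ2 := by
      apply hc2
      · intro t; by_cases h : t = t0
        · subst h; simpa [hKdef] using hVF
        · simp [hKdef, h]
      · intro t; by_cases h : t = t0
        · subst h; simpa [hKdef] using ⟨K0, hK0, hK0V⟩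
        · exact ⟨F, h2.2.2.1, by simp [hKdef, h]⟩
    refine ⟨H, hHmem, K, hKmem, ?_, ?_, ?_, ?_⟩
    · intro t; by_cases h : t = t0
      · subst h; simpa [hHdef] using hαU
      · simpa [hHdef, h] using haSE t
    · intro hm
      exact hβU (by simpa [hHdef] using hm t0)
    · intro t; by_cases h : t = t0
      · subst h; simpa [hKdef] using hβV
      · simpa [hKdef, h] using hbSE t
    · intro hm
      exact hαV (by simpa [hKdef] using hm t0)

end SoftBitop
end

section
/- Let (F, τ1, τ2) be a soft bitopological space with A nonempty, and suppose (F, τ1, τ2) is pairwise soft T2. Then for all a, b ∈ SE(F) with a ≠ b there exist subsets U, V of SE(F) such that U ∈ τ1*, V ∈ τ2*, a ∈ U, b ∈ V, and U ∩ V = ∅. -/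
namespace SoftBitop

variable {X A : Type*}

lemma aux_section {X A : Type*} (F : A → Set X) (τ : Set (A → Set X))
    (hτ : IsSoftTopology F τ) (H : A → Set X) (hH : H ∈ τ) (a : A → X)
    (ha : a ∈ SE F) (haH : MemS a H) :
    {c | c ∈ SE F ∧ MemS c H} ∈ tauStar F τ := by
  classical
  refine ⟨fun c hc => hc.1, fun t => ⟨H, hH, ?_⟩⟩
  ext x
  constructor
  · intro hx
    refine ⟨Function.update a t x, ⟨?_, ?_⟩, Function.update_self _ _ _⟩
    · intro s
      rcases eq_or_ne s t with rfl | hs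
      · simpa using hτ.1 H hH s hx
      · simpa [Function.update_of_ne hs] using ha s
    · intro s
      rcases eq_or_ne s t with rfl | hs
      · simpa using hx
      · simpa [Function.update_of_ne hs] using haH s
  · rintro ⟨c, ⟨hcF, hcH⟩, rfl⟩; exact hcH t

/-- pairwise soft `T2` implies the induced bitopology on the set
of soft elements is pairwise `T2`. -/
theorem stmt13 {X A : Type*} [Nonempty A] (F : A → Set X)
    (τ1 τ2 : Set (A → Set X))
    (h1 : IsSoftTopology F τ1) (h2 : IsSoftTopology F τ2)
    (hT2 : PairwiseSoftT2 F τ1 τ2) :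
    ∀ a ∈ SE F, ∀ b ∈ SE F, a ≠ b →
      ∃ U ∈ tauStar F τ1, ∃ V ∈ tauStar F τ2,
        a ∈ U ∧ b ∈ V ∧ U ∩ V = ∅ := by
  intro a ha b hb hab
  obtain ⟨H, hH, K, hK, haH, hbK, hdisj⟩ := hT2 a ha b hb hab
  refine ⟨{c | c ∈ SE F ∧ MemS c H}, aux_section F τ1 h1 H hH a ha haH,
          {c | c ∈ SE F ∧ MemS c K}, aux_section F τ2 h2 K hK b hb hbK,
          ⟨ha, haH⟩, ⟨hb, hbK⟩, ?_⟩
  ext c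
  simp only [Set.mem_inter_iff, Set.mem_setOf_eq, Set.mem_empty_iff_false, iff_false]
  rintro ⟨⟨_, hcH⟩, ⟨_, hcK⟩⟩
  obtain ⟨t⟩ := ‹Nonempty A›
  have : c t ∈ H t ∩ K t := ⟨hcH t, hcK t⟩
  rw [hdisj t] at this
  exact this

end SoftBitop
end

section
/- Let (F, τ1, τ2) be a soft bitopological space that is pairwise soft T1. Then for all a, b ∈ SE(F) with a ≠ b there exist subsets U, V of SE(F) such that U ∈ τ1*, V ∈ τ2*, a ∈ U, b ∉ U, b ∈ V, and a ∉ V. -/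
namespace SoftBitop

variable {X A : Type*}

lemma sectionAt_softElems {X A : Type*} (F H : A → Set X) (hsub : SoftSubset F H)
    (a : A → X) (ha : MemS a H) (t : A) :
    sectionAt {c | c ∈ SE F ∧ MemS c H} t = H t := by
  classical
  ext x
  constructor
  · rintro ⟨c, ⟨_, hcH⟩, rfl⟩
    exact hcH t
  · intro hx
    refine ⟨fun s => if s = t then x else a s, ⟨fun s => ?_, fun s => ?_⟩, by simp⟩
    · by_cases h : s = t
      · subst h; simpa using hsub s hx
      · simpa [h] using hsub s (ha s)
    · by_cases h : s = t
      · subst h; simpa using hx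
      · simpa [h] using ha s

/-- pairwise soft `T1` implies the induced bitopology on the set
of soft elements is pairwise `T1`. -/
theorem stmt14 {X A : Type*} (F : A → Set X) (τ1 τ2 : Set (A → Set X))
    (h1 : IsSoftTopology F τ1) (h2 : IsSoftTopology F τ2)
    (hT1 : PairwiseSoftT1 F τ1 τ2) :
    ∀ a ∈ SE F, ∀ b ∈ SE F, a ≠ b →
      ∃ U ∈ tauStar F τ1, ∃ V ∈ tauStar F τ2,
        a ∈ U ∧ b ∉ U ∧ b ∈ V ∧ a ∉ V := by
  intro a ha b hb hab
  obtain ⟨H, hH, K, hK, haH, hbH, hbK, haK⟩ := hT1 a ha b hb hab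
  refine ⟨{c | c ∈ SE F ∧ MemS c H}, ⟨fun c hc => hc.1, fun t => ?_⟩,
    {c | c ∈ SE F ∧ MemS c K}, ⟨fun c hc => hc.1, fun t => ?_⟩,
    ⟨ha, haH⟩, fun h => hbH h.2, ⟨hb, hbK⟩, fun h => haK h.2⟩
  · rw [sectionAt_softElems F H (h1.1 H hH) a haH t]
    exact ⟨H, hH, rfl⟩
  · rw [sectionAt_softElems F K (h2.1 K hK) b hbK t]
    exact ⟨K, hK, rfl⟩

end SoftBitop
end

section
/- Let (F, τ1, τ2) be a soft bitopological space in which both τ1 and τ2 are canonical, and let G be a soft subset of F that is pairwise soft compact. Then for every t ∈ A, the set G t is pairwise compact in the component bitopological space (F t, (τ1)_t, (τ2)_t): every family V ⊆ (τ1)_t ∪ (τ2)_t of subsets of F t with G t ⊆ ⋃₀ V admits a finite subfamily covering G t. -/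
namespace SoftBitop

variable {X A : Type*}

/-- for canonical soft bitopologies, pairwise soft compactness of
`G` implies pairwise compactness of each section `G t` in the component
bitopological space. -/
theorem stmt15 {X A : Type*} (F : A → Set X) (τ1 τ2 : Set (A → Set X))
    (h1 : IsSoftTopology F τ1) (h2 : IsSoftTopology F τ2)
    (hc1 : Canonical F τ1) (hc2 : Canonical F τ2)
    (G : A → Set X) (hG : SoftSubset F G)
    (hcomp : PairwiseSoftCompact τ1 τ2 G) :
    ∀ t, ∀ V : Set (Set X), V ⊆ compTop τ1 t ∪ compTop τ2 t →
      G t ⊆ ⋃₀ V →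
      ∃ V0 ⊆ V, V0.Finite ∧ G t ⊆ ⋃₀ V0 := by
  classical
  intro t V hV hcov
  rcases V.eq_empty_or_nonempty with rfl | ⟨U0, hU0⟩
  · refine ⟨∅, subset_rfl, Set.finite_empty, ?_⟩
    simpa using hcov
  -- extend each U ∈ V to a soft open set
  set g : Set X → (A → Set X) := fun U s => if s = t then U else F s with hg
  have hsub : ∀ U ∈ V, SoftSubset F (g U) := by
    intro U hU s
    simp only [hg]
    split
    · subst ‹s = t›
      rcases hV hU with ⟨H, hH, rfl⟩ | ⟨H, hH, rfl⟩
      · exact h1.1 H hH _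
      · exact h2.1 H hH _
    · exact subset_rfl
  have hgmem : ∀ U ∈ V, g U ∈ τ1 ∪ τ2 := by
    intro U hU
    rcases hV hU with hU1 | hU2
    · left
      refine hc1 (g U) (hsub U hU) (fun s => ?_)
      by_cases hs : s = t
      · subst hs; simpa [hg] using hU1
      · exact ⟨F, h1.2.2.1, by simp [hg, hs]⟩
    · right
      refine hc2 (g U) (hsub U hU) (fun s => ?_)
      by_cases hs : s = t
      · subst hs; simpa [hg] using hU2
      · exact ⟨F, h2.2.2.1, by simp [hg, hs]⟩
  have hC : g '' V ⊆ τ1 ∪ τ2 := by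
    rintro _ ⟨U, hU, rfl⟩; exact hgmem U hU
  have hCcov : ∀ s, G s ⊆ ⋃ H ∈ g '' V, H s := by
    intro s x hx
    by_cases hs : s = t
    · subst hs
      rcases hcov hx with ⟨U, hU, hxU⟩
      exact Set.mem_biUnion ⟨U, hU, rfl⟩ (by simpa [hg] using hxU)
    · exact Set.mem_biUnion ⟨U0, hU0, rfl⟩ (by simpa [hg, hs] using hG s hx)
  rcases hcomp (g '' V) hC hCcov with ⟨C0, hC0sub, hC0fin, hC0cov⟩
  -- pick a preimage for each member of C0
  set u : (A → Set X) → Set X := fun H =>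
    if h : ∃ U ∈ V, g U = H then h.choose else ∅ with hu
  have hu1 : ∀ H ∈ C0, u H ∈ V ∧ g (u H) = H := by
    intro H hH
    have h : ∃ U ∈ V, g U = H := by
      rcases hC0sub hH with ⟨U, hU, rfl⟩; exact ⟨U, hU, rfl⟩
    simp only [hu, dif_pos h]
    exact ⟨h.choose_spec.1, h.choose_spec.2⟩
  refine ⟨u '' C0, ?_, hC0fin.image u, ?_⟩
  · rintro _ ⟨H, hH, rfl⟩; exact (hu1 H hH).1
  · intro x hx
    rcases Set.mem_iUnion₂.mp (hC0cov t hx) with ⟨H, hH, hxH⟩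
    refine ⟨u H, ⟨H, hH, rfl⟩, ?_⟩
    rw [← (hu1 H hH).2] at hxH
    simpa [hg] using hxH

end SoftBitop
end

section
/- Let (F, τ1, τ2) be a soft bitopological space and assume the parameter set A is finite. Let G be a soft subset of F such that for every t ∈ A the set G t is pairwise compact in the component bitopological space (F t, (τ1)_t, (τ2)_t), i.e. every family V ⊆ (τ1)_t ∪ (τ2)_t with G t ⊆ ⋃₀ V admits a finite subfamily covering G t. Then G is pairwise soft compact. -/
namespace SoftBitop

variable {X A : Type*}

/-- if `A` is finite and every section `G t` is pairwise compact
in the component bitopological space, then `G` is pairwise soft compact. -/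
theorem stmt16 {X A : Type*} [Finite A] (F : A → Set X)
    (τ1 τ2 : Set (A → Set X))
    (h1 : IsSoftTopology F τ1) (h2 : IsSoftTopology F τ2)
    (G : A → Set X) (hG : SoftSubset F G)
    (hcpt : ∀ t, ∀ V : Set (Set X), V ⊆ compTop τ1 t ∪ compTop τ2 t →
      G t ⊆ ⋃₀ V → ∃ V0 ⊆ V, V0.Finite ∧ G t ⊆ ⋃₀ V0) :
    PairwiseSoftCompact τ1 τ2 G := by
  intro C hC hcov
  have key : ∀ t, ∃ D : Set (A → Set X), D ⊆ C ∧ D.Finite ∧ G t ⊆ ⋃ H ∈ D, H t := by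
    intro t
    obtain ⟨V0, hV0sub, hV0fin, hV0cov⟩ := hcpt t ((fun H => H t) '' C)
      (by
        rintro U ⟨H, hH, rfl⟩
        rcases hC hH with h | h
        · exact Or.inl ⟨H, h, rfl⟩
        · exact Or.inr ⟨H, h, rfl⟩)
      (by
        intro x hx
        obtain ⟨_, ⟨H, rfl⟩, _, ⟨hH, rfl⟩, hxH⟩ := hcov t hx
        exact ⟨H t, ⟨H, hH, rfl⟩, hxH⟩)
    have hex : ∀ U : Set X, ∃ H : A → Set X, U ∈ V0 → H ∈ C ∧ H t = U := by
      intro U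
      by_cases hU : U ∈ V0
      · obtain ⟨H, hH, hHt⟩ := hV0sub hU
        exact ⟨H, fun _ => ⟨hH, hHt⟩⟩
      · exact ⟨F, fun h => absurd h hU⟩
    choose f hf using hex
    refine ⟨f '' V0, ?_, hV0fin.image f, ?_⟩
    · rintro H ⟨U, hU, rfl⟩
      exact (hf U hU).1
    · intro x hx
      obtain ⟨U, hU, hxU⟩ := hV0cov hx
      exact Set.mem_biUnion (Set.mem_image_of_mem f hU) (by rw [(hf U hU).2]; exact hxU)
  choose D hDC hDfin hDcov using key
  refine ⟨⋃ t, D t, ?_, ?_, ?_⟩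
  · exact Set.iUnion_subset hDC
  · exact Set.finite_iUnion hDfin
  · intro t x hx
    have := hDcov t hx
    simp only [Set.mem_iUnion, exists_prop] at this ⊢
    obtain ⟨H, hH, hxH⟩ := this
    exact ⟨H, ⟨t, hH⟩, hxH⟩

end SoftBitop
end

section
/- Let A = Fin 2 and X = Fin 4, and define F : Fin 2 → Set (Fin 4) by F 0 = {0, 1} and F 1 = {2, 3}. Let K := {a : Fin 2 → Fin 4 | (a 0 = 0 ∧ a 1 = 2) ∨ (a 0 = 1 ∧ a 1 = 3)}. Then K ⊆ SE(F), but there is no soft subset H of F (i.e., no H : Fin 2 → Set (Fin 4) with H t ⊆ F t for all t) such that SE(H) = K. -/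
namespace SoftBitop

variable {X A : Type*}

/-- a subset of `SE F` that is not of the form `SE H` for any
soft subset `H` of `F`. -/
theorem stmt17 :
    let F : Fin 2 → Set (Fin 4) := ![{0, 1}, {2, 3}]
    let K : Set (Fin 2 → Fin 4) :=
      {a | (a 0 = 0 ∧ a 1 = 2) ∨ (a 0 = 1 ∧ a 1 = 3)}
    K ⊆ SE F ∧
    ¬ ∃ H : Fin 2 → Set (Fin 4), SoftSubset F H ∧ SE H = K := by
  intro F K
  constructor
  · rintro a (⟨h0, h1⟩ | ⟨h0, h1⟩) t
    · fin_cases t <;> simp [F, h0, h1]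
    · fin_cases t <;> simp [F, h0, h1]
  · rintro ⟨H, -, hSE⟩
    have ha : (![0, 2] : Fin 2 → Fin 4) ∈ K := Or.inl ⟨rfl, rfl⟩
    have hb : (![1, 3] : Fin 2 → Fin 4) ∈ K := Or.inr ⟨rfl, rfl⟩
    rw [← hSE] at ha hb
    have hc : (![0, 3] : Fin 2 → Fin 4) ∈ SE H := by
      intro t
      fin_cases t
      · simpa using ha 0
      · simpa using hb 1
    rw [hSE] at hc
    rcases hc with ⟨h0, h1⟩ | ⟨h0, h1⟩ <;> simp at h0 h1


end SoftBitop
end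

section
/- Let A = Bool, X = Bool, F : Bool → Set Bool with F t = Set.univ for all t, and let τ1 = τ2 = {Φ, F} be the indiscrete soft topology (where Φ t = ∅ for all t). Then: (i) the soft bitopological space (F, τ1, τ2) is not pairwise soft T0; and (ii) the sets U := {a : Bool → Bool | a false = a true} and V := {a : Bool → Bool | a false ≠ a true} are nonempty, disjoint, satisfy U ∪ V = SE(F), and both belong to τ1* (indeed each of their t-sections equals Set.univ, which lies in the component topology (τ1)_t). -/
namespace SoftBitop

variable {X A : Type*}

/-- the indiscrete soft bitopology is not pairwise soft `T0`, yet
the induced topology on soft elements contains the two nonempty disjoint sets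
`U` and `V` covering `SE F`. -/
theorem stmt19 :
    let F : Bool → Set Bool := fun _ => Set.univ
    let τ : Set (Bool → Set Bool) := {NullSoft, F}
    let U : Set (Bool → Bool) := {a | a false = a true}
    let V : Set (Bool → Bool) := {a | a false ≠ a true}
    ¬ PairwiseSoftT0 F τ τ ∧
    U.Nonempty ∧ V.Nonempty ∧ U ∩ V = ∅ ∧ U ∪ V = SE F ∧
    (∀ t, sectionAt U t = Set.univ) ∧ (∀ t, sectionAt V t = Set.univ) ∧
    U ∈ tauStar F τ ∧ V ∈ tauStar F τ := by
  intro F τ U V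
  have hsecU : ∀ t, sectionAt U t = Set.univ := by
    intro t
    ext x
    simp only [sectionAt, Set.mem_setOf_eq, Set.mem_univ, iff_true]
    exact ⟨fun _ => x, rfl, rfl⟩
  have hsecV : ∀ t, sectionAt V t = Set.univ := by
    intro t
    ext x
    simp only [sectionAt, Set.mem_setOf_eq, Set.mem_univ, iff_true]
    refine ⟨fun s => if s = t then x else !x, ?_, by simp⟩
    cases t <;> simp [V]
  have hcomp : ∀ t : Bool, (Set.univ : Set Bool) ∈ compTop τ t :=
    fun t => ⟨F, Or.inr rfl, rfl⟩
  refine ⟨?_, ⟨fun _ => false, rfl⟩, ⟨fun s => s, by simp [V]⟩, ?_, ?_, hsecU, hsecV,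
    ⟨fun a _ t => Set.mem_univ _, fun t => (hsecU t) ▸ hcomp t⟩,
    ⟨fun a _ t => Set.mem_univ _, fun t => (hsecV t) ▸ hcomp t⟩⟩
  · intro h
    obtain ⟨H, hH, hcase⟩ := h (fun _ => false) (fun _ => Set.mem_univ _)
      (fun _ => true) (fun _ => Set.mem_univ _) (by intro e; exact Bool.false_ne_true (congrFun e false))
    have : H = NullSoft ∨ H = F := by
      rcases hH with h | h
      · exact h
      · exact h
    rcases this with rfl | rfl
    · rcases hcase with ⟨h1, _⟩ | ⟨h1, _⟩ <;> exact (h1 false).elim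
    · rcases hcase with ⟨_, h2⟩ | ⟨_, h2⟩ <;> exact h2 (fun _ => Set.mem_univ _)
  · ext a
    simp only [Set.mem_inter_iff, Set.mem_setOf_eq, Set.mem_empty_iff_false, iff_false]
    rintro ⟨h1, h2⟩; exact h2 h1
  · ext a
    simp only [Set.mem_union, Set.mem_setOf_eq]
    constructor
    · intro _ t; exact Set.mem_univ _
    · intro _; exact em _


end SoftBitop
end
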